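/- For a T0 space X, the following conditions are equivalent: (1) X is sober; (2) X is a DC space and a d-space; (3) X is well-filtered and a DC space; (4) X is well-filtered and a Rudin space; (5) X is well-filtered and a well-filtered determined (WD) space. -/

import Mathlib

open Set Topology

universe u

variable {X : Type u}

/-- Specialization order: `x ≤ y` iff `x ∈ closure {y}`. -/
def specLE [TopologicalSpace X] (x y : X) : Prop := x ∈ closure ({y} : Set X)

/-- Directed subset w.r.t. the specialization order. -/
def dirOn [TopologicalSpace X] (D : Set X) : Prop :=
  D.Nonempty ∧ ∀ a ∈ D, ∀ b ∈ D, ∃ c ∈ D, specLE a c ∧ specLE b c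

/-- Downward closure w.r.t. the specialization order. -/
def dClo [TopologicalSpace X] (A : Set X) : Set X := {x | ∃ a ∈ A, specLE x a}

/-- Upward closure w.r.t. the specialization order. -/
def uClo [TopologicalSpace X] (A : Set X) : Set X := {x | ∃ a ∈ A, specLE a x}

/-- `x` is a supremum of `D` w.r.t. the specialization order. -/
def IsSupOf [TopologicalSpace X] (D : Set X) (x : X) : Prop :=
  (∀ d ∈ D, specLE d x) ∧ ∀ y, (∀ d ∈ D, specLE d y) → specLE x y

/-- A d-space: a T0 space in which every directed set (for the specialization order)
has a supremum, and every open set is inaccessible by directed suprema. -/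
def IsDSpace (X : Type u) [TopologicalSpace X] : Prop :=
  T0Space X ∧ (∀ D : Set X, dirOn D → ∃ x, IsSupOf D x) ∧
    ∀ D : Set X, dirOn D → ∀ x, IsSupOf D x →
      ∀ U : Set X, IsOpen U → x ∈ U → (D ∩ U).Nonempty

/-- A set is saturated if it is the intersection of the open sets containing it. -/
def IsSat [TopologicalSpace X] (A : Set X) : Prop :=
  A = ⋂₀ {U : Set X | IsOpen U ∧ A ⊆ U}

/-- The collection of nonempty compact saturated subsets. -/
def KSet (X : Type u) [TopologicalSpace X] : Set (Set X) :=
  {K | K.Nonempty ∧ IsCompact K ∧ IsSat K}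

/-- A filtered family of sets: nonempty, and every two members contain a common member. -/
def FiltFam [TopologicalSpace X] (𝒦 : Set (Set X)) : Prop :=
  𝒦.Nonempty ∧ ∀ K₁ ∈ 𝒦, ∀ K₂ ∈ 𝒦, ∃ K₃ ∈ 𝒦, K₃ ⊆ K₁ ∧ K₃ ⊆ K₂

/-- Well-filtered space. -/
def IsWF (X : Type u) [TopologicalSpace X] : Prop :=
  T0Space X ∧ ∀ 𝒦 : Set (Set X), 𝒦 ⊆ KSet X → FiltFam 𝒦 →
    ∀ U : Set X, IsOpen U → ⋂₀ 𝒦 ⊆ U → ∃ K ∈ 𝒦, K ⊆ U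

/-- Sober space: every irreducible closed subset is the closure of a unique point. -/
def IsSober (X : Type u) [TopologicalSpace X] : Prop :=
  ∀ A : Set X, IsIrreducible A → IsClosed A → ∃! x : X, A = closure {x}

/-- `V` is way below `U` in the lattice of open sets: every open cover of `U`
has a finite subfamily covering `V`. -/
def wayBelow [TopologicalSpace X] (V U : Set X) : Prop :=
  ∀ 𝒞 : Set (Set X), (∀ W ∈ 𝒞, IsOpen W) → U ⊆ ⋃₀ 𝒞 →
    ∃ 𝒟 ⊆ 𝒞, 𝒟.Finite ∧ V ⊆ ⋃₀ 𝒟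

/-- Core compact space. -/
def CoreCompact (X : Type u) [TopologicalSpace X] : Prop :=
  ∀ (x : X) (U : Set X), IsOpen U → x ∈ U →
    ∃ V : Set X, IsOpen V ∧ x ∈ V ∧ wayBelow V U

/-- The underlying type of the Smyth power space: nonempty compact saturated subsets. -/
abbrev KS (X : Type u) [TopologicalSpace X] : Type u :=
  {K : Set X // K.Nonempty ∧ IsCompact K ∧ IsSat K}

/-- The upper Vietoris topology on `KS X`, generated by the sets
`□U = {K | K ⊆ U}` for `U` open; this makes `KS X` the Smyth power space `P_S(X)`. -/
instance (X : Type u) [TopologicalSpace X] : TopologicalSpace (KS X) :=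
  TopologicalSpace.generateFrom
    {S | ∃ U : Set X, IsOpen U ∧ S = {K : KS X | (K : Set X) ⊆ U}}

/-- Rudin set: a nonempty closed set that is a minimal closed set meeting all
members of some filtered family of nonempty compact saturated sets. -/
def RudinSet [TopologicalSpace X] (A : Set X) : Prop :=
  IsClosed A ∧ A.Nonempty ∧ ∃ 𝒦 : Set (Set X), 𝒦 ⊆ KSet X ∧ FiltFam 𝒦 ∧
    (∀ K ∈ 𝒦, (K ∩ A).Nonempty) ∧
    ∀ B : Set X, IsClosed B → B ⊆ A → (∀ K ∈ 𝒦, (K ∩ B).Nonempty) → B = A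

/-- Well-filtered determined (WD) set. -/
def IsWDSet [TopologicalSpace X] (A : Set X) : Prop :=
  IsClosed A ∧ A.Nonempty ∧ ∀ (Y : Type u) [TopologicalSpace Y], IsWF Y →
    ∀ f : X → Y, Continuous f → ∃ y : Y, closure (f '' A) = closure {y}

/-- Rudin space: every irreducible closed set is a Rudin set. -/
def RudinSpace (X : Type u) [TopologicalSpace X] : Prop :=
  ∀ A : Set X, IsClosed A → IsIrreducible A → RudinSet A

/-- WD space: every irreducible closed set is a WD set. -/
def WDSpace (X : Type u) [TopologicalSpace X] : Prop :=
  ∀ A : Set X, IsClosed A → IsIrreducible A → IsWDSet A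

/-- DC space: every irreducible closed set is the closure of a directed set. -/
def DCSpace (X : Type u) [TopologicalSpace X] : Prop :=
  ∀ A : Set X, IsClosed A → IsIrreducible A → ∃ D : Set X, dirOn D ∧ A = closure D

/-!
A sober space is well-filtered by Rudin's lemma: if no member of a filtered family of compact
saturated sets lies in an open set `U`, a minimal closed subset of `Uᶜ` meeting all members is
irreducible, and its generic point lies in every member. Conversely each of the other conditions
produces, for an irreducible closed set `A`, a point `x` with `A = closure {x}`: the supremum of a
directed set with closure `A` in a d-space; in a well-filtered space, a point of `A` common to all
members of a family witnessing that `A` is a Rudin set (and `closure D` for a directed `D` is a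
Rudin set, witnessed by the principal upper sets of points of `D`); and for a WD set, the
definition applied to the identity map of the well-filtered space itself.
-/

def MeetsAll (𝒦 : Set (Set X)) (A : Set X) : Prop := ∀ K ∈ 𝒦, (K ∩ A).Nonempty

section
variable [TopologicalSpace X]

lemma specLE_iff_specializes {x y : X} : specLE x y ↔ y ⤳ x :=
  specializes_iff_mem_closure.symm

lemma isSat_iff_nhdsKer_eq {A : Set X} : IsSat A ↔ nhdsKer A = A := by
  rw [IsSat, nhdsKer_def, eq_comm]

lemma nhdsKer_singleton_mem_KSet (x : X) : nhdsKer {x} ∈ KSet X :=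
  ⟨⟨x, subset_nhdsKer rfl⟩, isCompact_singleton.nhdsKer,
    isSat_iff_nhdsKer_eq.2 (nhdsKer_nhdsKer _)⟩

lemma IsSat.mem_of_inter_closure_singleton_nonempty {K : Set X} (hK : IsSat K) {x : X}
    (h : (K ∩ closure {x}).Nonempty) : x ∈ K := by
  obtain ⟨k, hkK, hkx⟩ := h
  rw [← isSat_iff_nhdsKer_eq.1 hK]
  exact mem_nhdsKer_iff_specializes.2 ⟨k, hkK, specializes_iff_mem_closure.2 hkx⟩

lemma isSober_of_forall_exists [T0Space X]
    (h : ∀ A : Set X, IsIrreducible A → IsClosed A → ∃ x, A = closure {x}) : IsSober X := by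
  intro A hAi hAc
  obtain ⟨x, rfl⟩ := h A hAi hAc
  exact ⟨x, rfl, fun y hy => (inseparable_iff_closure_eq.2 hy.symm).eq⟩

lemma dirOn.isIrreducible {D : Set X} (hD : dirOn D) : IsIrreducible D := by
  refine ⟨hD.1, fun U V hU hV ⟨a, haD, haU⟩ ⟨b, hbD, hbV⟩ => ?_⟩
  obtain ⟨c, hcD, hac, hbc⟩ := hD.2 a haD b hbD
  exact ⟨c, hcD, (specLE_iff_specializes.1 hac).mem_open hU haU,
    (specLE_iff_specializes.1 hbc).mem_open hV hbV⟩

lemma isSupOf_of_closure_eq {D : Set X} {x : X} (h : closure D = closure {x}) :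
    IsSupOf D x :=
  ⟨fun _ hd => h.subset (subset_closure hd),
    fun _ hy => closure_minimal hy isClosed_closure (h.symm.subset (subset_closure rfl))⟩

lemma IsSupOf.unique [T0Space X] {D : Set X} {x y : X} (hx : IsSupOf D x) (hy : IsSupOf D y) :
    x = y :=
  ((specLE_iff_specializes.1 (hy.2 x hx.1)).antisymm
    (specLE_iff_specializes.1 (hx.2 y hy.1))).eq

lemma IsDSpace.closure_eq_closure_singleton (hd : IsDSpace X) {D : Set X} (hD : dirOn D)
    {x : X} (hx : IsSupOf D x) : closure D = closure {x} := by
  refine (closure_minimal hx.1 isClosed_closure).antisymm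
    (closure_minimal (singleton_subset_iff.2 ?_) isClosed_closure)
  exact mem_closure_iff.2 fun U hU hxU => inter_comm D U ▸ hd.2.2 D hD x hx U hU hxU

lemma dirOn.rudinSet_closure {D : Set X} (hD : dirOn D) : RudinSet (closure D) := by
  refine ⟨isClosed_closure, hD.1.closure, (fun d => nhdsKer {d}) '' D, ?_, ?_, ?_, ?_⟩
  · rintro _ ⟨d, -, rfl⟩
    exact nhdsKer_singleton_mem_KSet d
  · refine ⟨hD.1.image _, ?_⟩
    rintro _ ⟨a, ha, rfl⟩ _ ⟨b, hb, rfl⟩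
    obtain ⟨c, hc, hac, hbc⟩ := hD.2 a ha b hb
    exact ⟨_, ⟨c, hc, rfl⟩, specializes_iff_nhdsKer_subset.1 (specLE_iff_specializes.1 hac),
      specializes_iff_nhdsKer_subset.1 (specLE_iff_specializes.1 hbc)⟩
  · rintro _ ⟨d, hd, rfl⟩
    exact ⟨d, subset_nhdsKer rfl, subset_closure hd⟩
  · intro B hB hBD hmeet
    refine hBD.antisymm (closure_minimal (fun d hd => ?_) hB)
    obtain ⟨b, hbd, hbB⟩ := hmeet _ ⟨d, hd, rfl⟩
    exact (mem_nhdsKer_singleton.1 hbd).mem_closed hB hbB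

lemma DCSpace.rudinSpace (hdc : DCSpace X) : RudinSpace X := fun A hAc hAi => by
  obtain ⟨D, hD, rfl⟩ := hdc A hAc hAi
  exact hD.rudinSet_closure

lemma IsSober.dcSpace (hs : IsSober X) : DCSpace X := fun A hAc hAi => by
  obtain ⟨x, rfl, -⟩ := hs A hAi hAc
  exact ⟨{x}, ⟨singleton_nonempty x, by rintro _ rfl _ rfl; exact ⟨_, rfl, subset_closure rfl,
    subset_closure rfl⟩⟩, rfl⟩

lemma IsSober.isDSpace [T0Space X] (hs : IsSober X) : IsDSpace X := by
  have hgen : ∀ D : Set X, dirOn D → ∃ x, closure D = closure {x} := fun D hD =>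
    (hs _ hD.isIrreducible.closure isClosed_closure).exists
  refine ⟨‹_›, fun D hD => (hgen D hD).imp fun _ => isSupOf_of_closure_eq,
    fun D hD x hx U hU hxU => ?_⟩
  obtain ⟨y, hy⟩ := hgen D hD
  have hxD : x ∈ closure D := by
    rw [hy, (isSupOf_of_closure_eq hy).unique hx]
    exact subset_closure rfl
  obtain ⟨d, hdU, hdD⟩ := mem_closure_iff.1 hxD U hU hxU
  exact ⟨d, hdD, hdU⟩

lemma isSober_of_dcSpace_of_isDSpace (hdc : DCSpace X) (hd : IsDSpace X) : IsSober X :=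
  have := hd.1
  isSober_of_forall_exists fun A hAi hAc => by
    obtain ⟨D, hD, rfl⟩ := hdc A hAc hAi
    obtain ⟨x, hx⟩ := hd.2.1 D hD
    exact ⟨x, hd.closure_eq_closure_singleton hD hx⟩

lemma FiltFam.meetsAll_or_of_union {𝒦 : Set (Set X)} (hf : FiltFam 𝒦) {B C : Set X}
    (h : MeetsAll 𝒦 (B ∪ C)) : MeetsAll 𝒦 B ∨ MeetsAll 𝒦 C := by
  refine or_iff_not_imp_left.2 fun hB K hK => ?_
  obtain ⟨K₁, hK₁, hK₁B⟩ : ∃ K₁ ∈ 𝒦, K₁ ∩ B = ∅ := by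
    simpa only [MeetsAll, not_forall, not_nonempty_iff_eq_empty, exists_prop] using hB
  obtain ⟨K₃, hK₃, h₃₁, h₃⟩ := hf.2 K₁ hK₁ K hK
  obtain ⟨k, hk, hkB | hkC⟩ := h K₃ hK₃
  · exact absurd (hK₁B ▸ ⟨h₃₁ hk, hkB⟩ : k ∈ (∅ : Set X)) (notMem_empty k)
  · exact ⟨k, h₃ hk, hkC⟩

lemma exists_minimal_closed_meetsAll {𝒦 : Set (Set X)} (h𝒦 : ∀ K ∈ 𝒦, IsCompact K)
    {A₀ : Set X} (hA₀ : IsClosed A₀) (hmeet : MeetsAll 𝒦 A₀) :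
    ∃ A ⊆ A₀, Minimal (fun A => IsClosed A ∧ MeetsAll 𝒦 A) A := by
  refine zorn_superset_nonempty _ (fun c hcS hchain hcne => ?_) A₀ ⟨hA₀, hmeet⟩
  refine ⟨⋂₀ c, ⟨isClosed_sInter fun C hC => (hcS hC).1, fun K hK => ?_⟩,
    fun _ => sInter_subset_of_mem⟩
  have := hcne.to_subtype
  have hdir : Directed (· ⊇ ·) (Subtype.val : c → Set X) := fun C₁ C₂ =>
    (hchain.total C₁.2 C₂.2).elim (fun h => ⟨C₁, subset_rfl, h⟩) fun h => ⟨C₂, h, subset_rfl⟩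
  rw [sInter_eq_iInter, nonempty_iff_ne_empty]
  intro hempty
  obtain ⟨⟨C, hC⟩, hKC⟩ := (h𝒦 K hK).elim_directed_family_closed _ (fun C => (hcS C.2).1)
    hempty hdir
  exact (nonempty_iff_ne_empty.1 ((hcS hC).2 K hK)) hKC

lemma isIrreducible_of_minimal_meetsAll {𝒦 : Set (Set X)} (hf : FiltFam 𝒦) {A : Set X}
    (hA : Minimal (fun A => IsClosed A ∧ MeetsAll 𝒦 A) A) : IsIrreducible A := by
  obtain ⟨K₀, hK₀⟩ := hf.1
  refine ⟨(hA.prop.2 K₀ hK₀).mono inter_subset_right,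
    isPreirreducible_iff_isClosed_union_isClosed.2 fun F₁ F₂ hF₁ hF₂ hsub => ?_⟩
  have hunion : MeetsAll 𝒦 ((A ∩ F₁) ∪ (A ∩ F₂)) := by
    rw [← inter_union_distrib_left, inter_eq_left.2 hsub]
    exact hA.prop.2
  refine (hf.meetsAll_or_of_union hunion).imp (fun h => ?_) (fun h => ?_)
  · exact inter_eq_left.1 (hA.eq_of_subset ⟨hA.prop.1.inter hF₁, h⟩ inter_subset_left)
  · exact inter_eq_left.1 (hA.eq_of_subset ⟨hA.prop.1.inter hF₂, h⟩ inter_subset_left)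

lemma IsSober.isWF [T0Space X] (hs : IsSober X) : IsWF X := by
  refine ⟨‹_›, fun 𝒦 h𝒦 hf U hU hsub => ?_⟩
  by_contra! hno
  obtain ⟨A, hAU, hA⟩ := exists_minimal_closed_meetsAll (fun K hK => (h𝒦 hK).2.1)
    hU.isClosed_compl fun K hK => not_subset.1 (hno K hK)
  obtain ⟨x, hx, -⟩ := hs A (isIrreducible_of_minimal_meetsAll hf hA) hA.prop.1
  have hx𝒦 : x ∈ ⋂₀ 𝒦 := fun K hK =>
    (h𝒦 hK).2.2.mem_of_inter_closure_singleton_nonempty (hx ▸ hA.prop.2 K hK)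
  exact hAU (hx ▸ subset_closure rfl) (hsub hx𝒦)

lemma IsWF.sInter_inter_nonempty (hw : IsWF X) {𝒦 : Set (Set X)} (h𝒦 : 𝒦 ⊆ KSet X)
    (hf : FiltFam 𝒦) {A : Set X} (hA : IsClosed A) (hmeet : MeetsAll 𝒦 A) :
    (⋂₀ 𝒦 ∩ A).Nonempty := by
  by_contra! h
  obtain ⟨K, hK, hKA⟩ := hw.2 𝒦 h𝒦 hf Aᶜ hA.isOpen_compl
    (subset_compl_iff_disjoint_right.2 (disjoint_iff_inter_eq_empty.2 h))
  obtain ⟨k, hkK, hkA⟩ := hmeet K hK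
  exact hKA hkK hkA

lemma RudinSet.exists_eq_closure_singleton (hw : IsWF X) {A : Set X} (hA : RudinSet A) :
    ∃ x, A = closure {x} := by
  obtain ⟨hAc, -, 𝒦, h𝒦, hf, hmeet, hmin⟩ := hA
  obtain ⟨x, hx𝒦, hxA⟩ := hw.sInter_inter_nonempty h𝒦 hf hAc hmeet
  exact ⟨x, (hmin _ isClosed_closure (closure_minimal (singleton_subset_iff.2 hxA) hAc)
    fun K hK => ⟨x, hx𝒦 K hK, subset_closure rfl⟩).symm⟩

lemma IsSober.wdSpace (hs : IsSober X) : WDSpace X := fun A hAc hAi => by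
  obtain ⟨x, rfl, -⟩ := hs A hAi hAc
  refine ⟨hAc, ⟨x, subset_closure rfl⟩, fun Y _ _ f hf => ⟨f x, ?_⟩⟩
  rw [closure_image_closure hf, image_singleton]

lemma IsWDSet.exists_eq_closure_singleton (hw : IsWF X) {A : Set X} (hA : IsWDSet A) :
    ∃ x, A = closure {x} := by
  obtain ⟨x, hx⟩ := hA.2.2 X hw id continuous_id
  exact ⟨x, by rwa [image_id, hA.1.closure_eq] at hx⟩

end

/-- for a T0 space, sober ⇔ DC d-space ⇔ well-filtered DC space
⇔ well-filtered Rudin space ⇔ well-filtered WD space. -/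
theorem stmt9 {X : Type u} [TopologicalSpace X] [T0Space X] :
    List.TFAE [IsSober X,
      DCSpace X ∧ IsDSpace X,
      IsWF X ∧ DCSpace X,
      IsWF X ∧ RudinSpace X,
      IsWF X ∧ WDSpace X] := by
  tfae_have 1 → 2 := fun hs => ⟨hs.dcSpace, hs.isDSpace⟩
  tfae_have 2 → 1 := fun ⟨hdc, hd⟩ => isSober_of_dcSpace_of_isDSpace hdc hd
  tfae_have 1 → 3 := fun hs => ⟨hs.isWF, hs.dcSpace⟩
  tfae_have 3 → 4 := fun ⟨hw, hdc⟩ => ⟨hw, hdc.rudinSpace⟩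
  tfae_have 4 → 1 := fun ⟨hw, hr⟩ => isSober_of_forall_exists fun A hAi hAc =>
    (hr A hAc hAi).exists_eq_closure_singleton hw
  tfae_have 1 → 5 := fun hs => ⟨hs.isWF, hs.wdSpace⟩
  tfae_have 5 → 1 := fun ⟨hw, hwd⟩ => isSober_of_forall_exists fun A hAi hAc =>
    (hwd A hAc hAi).exists_eq_closure_singleton hw
  tfae_finish
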